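/- If f is a morphism on finite words over {1,2,3} such that f(w) = w, where w is the Arshon sequence, then |f(1)| + |f(2)| + |f(3)| ≡ 0 (mod 3). -/

import Mathlib

/-!
Every block `oddBlock a`, `evenBlock a` (a ∈ {1,2,3}) is a permutation of `123`, so each
aligned factor of length 3 of `ψ(u)` contains exactly one letter 1. As `w = ψ(w)`, the prefix
of `w` of length `3S` contains exactly `S` ones. Put `S = |f(1)| + |f(2)| + |f(3)|`. The prefix
`123132312` of `w` contains each letter three times, so `f` maps it to a word of length `3S`,
which is the prefix of `w` of that length, and which contains
`3 (|f(1)|₁ + |f(2)|₁ + |f(3)|₁)` ones. Hence `3 ∣ S`.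
-/

open List Filter

/-- Image of a letter in an odd (1-based) position under ψ. -/
def oddBlock : ℕ → List ℕ
  | 1 => [1, 2, 3]
  | 2 => [2, 3, 1]
  | 3 => [3, 1, 2]
  | _ => []

/-- Image of a letter in an even (1-based) position under ψ. -/
def evenBlock : ℕ → List ℕ
  | 1 => [3, 2, 1]
  | 2 => [1, 3, 2]
  | 3 => [2, 1, 3]
  | _ => []

/-- The Arshon map ψ: replace the letter at each odd (1-based) position by its
`oddBlock`, and the letter at each even position by its `evenBlock`. -/
def psi (l : List ℕ) : List ℕ :=
  (((List.range l.length).zip l).map fun p => if p.1 % 2 = 0 then oddBlock p.2 else evenBlock p.2).flatten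

/-- The Arshon sequence `w = lim ψ^k(1)` as an infinite word: since
`|ψ^[n+1] [1]| = 3^(n+1) > n`, the `n`-th letter (0-based) is well defined. -/
def arshon (n : ℕ) : ℕ := (psi^[n + 1] [1]).getD n 0

/-- A word over the alphabet {1,2,3}. -/
def Word123 (l : List ℕ) : Prop := ∀ a ∈ l, a = 1 ∨ a = 2 ∨ a = 3

/-- A morphism on finite words over {1,2,3}. -/
def IsMorphism123 (f : List ℕ → List ℕ) : Prop :=
  (∀ u v, f (u ++ v) = f u ++ f v) ∧ ∀ l, Word123 l → Word123 (f l)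

/-- `f(w) = w` where `w` is the infinite Arshon word: the image of every finite
prefix of `w` is again a prefix of `w`, and these images have unbounded length
(so that `f(w)` is genuinely the infinite word `w`). -/
def FixesArshon (f : List ℕ → List ℕ) : Prop :=
  (∀ n, f ((List.range n).map arshon)
      = (List.range (f ((List.range n).map arshon)).length).map arshon) ∧
  Tendsto (fun n => (f ((List.range n).map arshon)).length) atTop atTop

/-- The infinite word `s` is obtained by iterating the morphism `f` on the
letter 1: `f(1)` begins with 1, `|f^k(1)| → ∞`, and `s = lim f^k(1)`. -/
def IterLimit (f : List ℕ → List ℕ) (s : ℕ → ℕ) : Prop :=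
  (∃ t, f [1] = 1 :: t) ∧
  Tendsto (fun k => (f^[k] [1]).length) atTop atTop ∧
  ∀ k n, n < (f^[k] [1]).length → (f^[k] [1]).getD n 0 = s n

def arshonBlock (k a : ℕ) : List ℕ := if k % 2 = 0 then oddBlock a else evenBlock a

/-- `ψ` applied to a factor `l` that starts at the 0-based position `k` of a word. -/
def psiFrom : ℕ → List ℕ → List ℕ
  | _, [] => []
  | k, a :: l => arshonBlock k a ++ psiFrom (k + 1) l

lemma psiFrom_append (k : ℕ) (u v : List ℕ) :
    psiFrom k (u ++ v) = psiFrom k u ++ psiFrom (k + u.length) v := by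
  induction u generalizing k with
  | nil => simp [psiFrom]
  | cons a u ih =>
    simp only [cons_append, psiFrom, ih, append_assoc, length_cons]
    rw [Nat.add_right_comm, Nat.add_assoc]

lemma flatten_map_zip_range'_eq_psiFrom (k : ℕ) (l : List ℕ) :
    (((range' k l.length).zip l).map fun p => arshonBlock p.1 p.2).flatten = psiFrom k l := by
  induction l generalizing k with
  | nil => rfl
  | cons a l ih => simp [range'_succ, psiFrom, ih]

lemma psi_eq_psiFrom (l : List ℕ) : psi l = psiFrom 0 l := by
  rw [← flatten_map_zip_range'_eq_psiFrom, ← range_eq_range']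
  rfl

lemma psi_isPrefix_psi {u v : List ℕ} (h : u <+: v) : psi u <+: psi v := by
  obtain ⟨t, rfl⟩ := h
  simp [psi_eq_psiFrom, psiFrom_append]

lemma length_arshonBlock (k : ℕ) {a : ℕ} (ha : a = 1 ∨ a = 2 ∨ a = 3) :
    (arshonBlock k a).length = 3 := by
  rcases ha with rfl | rfl | rfl <;> unfold arshonBlock <;> split <;> rfl

lemma count_one_arshonBlock (k : ℕ) {a : ℕ} (ha : a = 1 ∨ a = 2 ∨ a = 3) :
    (arshonBlock k a).count 1 = 1 := by
  rcases ha with rfl | rfl | rfl <;> unfold arshonBlock <;> split <;> rfl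

lemma word123_arshonBlock (k : ℕ) {a : ℕ} (ha : a = 1 ∨ a = 2 ∨ a = 3) :
    Word123 (arshonBlock k a) := by
  rcases ha with rfl | rfl | rfl <;> unfold arshonBlock <;> split <;> unfold Word123 <;> decide

lemma word123_psiFrom (k : ℕ) {l : List ℕ} (hl : Word123 l) : Word123 (psiFrom k l) := by
  induction l generalizing k with
  | nil => simp [psiFrom, Word123]
  | cons a l ih =>
    rw [Word123, forall_mem_cons] at hl
    intro b hb
    rcases mem_append.mp hb with hb | hb
    · exact word123_arshonBlock k hl.1 b hb
    · exact ih (k + 1) hl.2 b hb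

lemma length_psiFrom (k : ℕ) {l : List ℕ} (hl : Word123 l) :
    (psiFrom k l).length = 3 * l.length := by
  induction l generalizing k with
  | nil => rfl
  | cons a l ih =>
    rw [Word123, forall_mem_cons] at hl
    rw [psiFrom, length_append, length_arshonBlock k hl.1, ih (k + 1) hl.2, length_cons]
    ring

lemma count_one_take_psiFrom (k : ℕ) {l : List ℕ} (hl : Word123 l) {S : ℕ}
    (hS : S ≤ l.length) :
    ((psiFrom k l).take (3 * S)).count 1 = S := by
  induction l generalizing k S with
  | nil => simp_all
  | cons a l ih =>
    rw [Word123, forall_mem_cons] at hl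
    cases S with
    | zero => simp
    | succ S =>
      have hsplit : 3 * (S + 1) = (arshonBlock k a).length + 3 * S := by
        rw [length_arshonBlock k hl.1]
        ring
      rw [psiFrom, hsplit, take_length_add_append,
        count_append, count_one_arshonBlock k hl.1, ih (k + 1) hl.2 (by simpa using hS)]
      omega

lemma word123_psi_iterate (m : ℕ) : Word123 (psi^[m] [1]) := by
  induction m with
  | zero => simp [Word123]
  | succ m ih =>
    rw [Function.iterate_succ_apply', psi_eq_psiFrom]
    exact word123_psiFrom 0 ih

lemma length_psi_iterate (m : ℕ) : (psi^[m] [1]).length = 3 ^ m := by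
  induction m with
  | zero => rfl
  | succ m ih =>
    rw [Function.iterate_succ_apply', psi_eq_psiFrom, length_psiFrom 0 (word123_psi_iterate m), ih,
      pow_succ, Nat.mul_comm]

lemma psi_iterate_isPrefix_succ (m : ℕ) : psi^[m] [1] <+: psi^[m + 1] [1] := by
  induction m with
  | zero => exact ⟨[2, 3], rfl⟩
  | succ m ih => simpa only [Function.iterate_succ_apply'] using psi_isPrefix_psi ih

lemma psi_iterate_isPrefix {m m' : ℕ} (h : m ≤ m') : psi^[m] [1] <+: psi^[m'] [1] := by
  induction m', h using Nat.le_induction with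
  | base => exact prefix_refl _
  | succ m' _ ih => exact ih.trans (psi_iterate_isPrefix_succ m')

lemma getD_psi_iterate_of_le {m m' n : ℕ} (h : m ≤ m') (hn : n < 3 ^ m) :
    (psi^[m'] [1]).getD n 0 = (psi^[m] [1]).getD n 0 := by
  have hn' : n < (psi^[m] [1]).length := by rwa [length_psi_iterate]
  obtain ⟨t, ht⟩ := psi_iterate_isPrefix h
  rw [← ht, getD_append _ _ _ _ hn']

lemma arshon_eq_getD {m n : ℕ} (hn : n < 3 ^ m) : arshon n = (psi^[m] [1]).getD n 0 := by
  have hn' : n < 3 ^ (n + 1) :=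
    (Nat.lt_pow_self (by norm_num)).trans (Nat.pow_lt_pow_succ (by norm_num))
  rw [arshon, ← getD_psi_iterate_of_le (le_max_left m (n + 1)) hn,
    ← getD_psi_iterate_of_le (le_max_right m (n + 1)) hn']

lemma map_arshon_range {m N : ℕ} (h : N ≤ 3 ^ m) :
    (range N).map arshon = (psi^[m] [1]).take N := by
  refine ext_getElem (by simp [length_psi_iterate, h]) fun n hn _ => ?_
  have hn : n < N := by simpa using hn
  rw [getElem_map, getElem_range, getElem_take, arshon_eq_getD (hn.trans_le h), getD_eq_getElem]

lemma count_one_map_arshon_range (S : ℕ) : ((range (3 * S)).map arshon).count 1 = S := by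
  have hS : S ≤ 3 ^ (3 * S) := (Nat.lt_pow_self (by norm_num)).le.trans
    (Nat.pow_le_pow_right (by norm_num) (by omega))
  rw [map_arshon_range (m := 3 * S + 1) (by rw [pow_succ]; omega), Function.iterate_succ_apply',
    psi_eq_psiFrom]
  exact count_one_take_psiFrom 0 (word123_psi_iterate _) (by rwa [length_psi_iterate])

lemma map_arshon_range_nine : (range 9).map arshon = [1, 2, 3, 1, 3, 2, 3, 1, 2] := by
  rw [map_arshon_range (m := 2) (by norm_num)]
  rfl

lemma eq_flatMap_of_map_append {α β : Type*} {f : List α → List β}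
    (hf : ∀ u v, f (u ++ v) = f u ++ f v) (l : List α) : f l = l.flatMap fun a => f [a] := by
  have hnil : f [] = [] := by simpa using congrArg length (hf [] [])
  induction l with
  | nil => exact hnil
  | cons a l ih =>
    rw [flatMap_cons, ← ih, ← hf]
    rfl

/-- If `f` is a morphism on words over {1,2,3} with `f(w) = w` (`w` the Arshon
sequence), then `|f(1)| + |f(2)| + |f(3)| ≡ 0 (mod 3)`. -/
theorem arshon_fixing_morphism_length_sum_mod_three
    (f : List ℕ → List ℕ) (hf : IsMorphism123 f) (hfix : FixesArshon f) :
    ((f [1]).length + (f [2]).length + (f [3]).length) % 3 = 0 := by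
  have himage := eq_flatMap_of_map_append hf.1 [1, 2, 3, 1, 3, 2, 3, 1, 2]
  have hlen : (f [1, 2, 3, 1, 3, 2, 3, 1, 2]).length
      = 3 * ((f [1]).length + (f [2]).length + (f [3]).length) := by
    simp only [himage, length_flatMap, map_cons, map_nil, sum_cons, sum_nil]
    omega
  have hcount : (f [1, 2, 3, 1, 3, 2, 3, 1, 2]).count 1
      = 3 * ((f [1]).count 1 + (f [2]).count 1 + (f [3]).count 1) := by
    simp only [himage, count_flatMap, map_cons, Function.comp_apply, map_nil, sum_cons, sum_nil]
    omega
  have hfix9 := congrArg (count 1) (hfix.1 9)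
  rw [map_arshon_range_nine, hlen, count_one_map_arshon_range, hcount] at hfix9
  omega
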